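/- arXiv:2601.05089 — 6 statements merged into one kernel-verified Lean document; each statement's English description precedes it below -/
import Mathlib

section
/- For any two witnesses W₁, W₂ of (V, σ) (i.e. subrepresentations of V maximizing σ(dim W)), both W₁ ∩ W₂ and W₁ + W₂ are also witnesses of (V, σ). -/
open Module

/-- A family of subspaces `W x ⊆ ℂ^{α x}` is a subrepresentation of the
representation `M` of the quiver with vertices `Vt`, arrows `At`,
head map `hd`, tail map `tl`, if it is stable under all arrow maps. -/
def IsSubrep {Vt At : Type} (hd tl : At → Vt) (α : Vt → ℕ)
    (M : ∀ a : At, Matrix (Fin (α (hd a))) (Fin (α (tl a))) ℂ)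
    (W : ∀ x : Vt, Submodule ℂ (Fin (α x) → ℂ)) : Prop :=
  ∀ a : At, ∀ v ∈ W (tl a), (M a).mulVec v ∈ W (hd a)

/-- `σ(dim W) = ∑ x σ(x) dim W(x)`. -/
noncomputable def sval {Vt : Type} [Fintype Vt] (α : Vt → ℕ) (σ : Vt → ℤ)
    (W : ∀ x : Vt, Submodule ℂ (Fin (α x) → ℂ)) : ℤ :=
  ∑ x, σ x * (Module.finrank ℂ (W x) : ℤ)

/-- A witness of `(V,σ)` : a subrepresentation maximizing `σ(dim ·)`
(i.e. attaining the discrepancy). -/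
def IsWitness {Vt At : Type} [Fintype Vt] (hd tl : At → Vt) (α : Vt → ℕ)
    (M : ∀ a : At, Matrix (Fin (α (hd a))) (Fin (α (tl a))) ℂ) (σ : Vt → ℤ)
    (W : ∀ x : Vt, Submodule ℂ (Fin (α x) → ℂ)) : Prop :=
  IsSubrep hd tl α M W ∧
    ∀ W', IsSubrep hd tl α M W' → sval α σ W' ≤ sval α σ W

/-- If `W₁, W₂` are witnesses of `(V,σ)`, then so are `W₁ ∩ W₂` and `W₁ + W₂`. -/
theorem witnesses_inf_sup {Vt At : Type} [Fintype Vt] [Fintype At]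
    (hd tl : At → Vt) (α : Vt → ℕ)
    (M : ∀ a : At, Matrix (Fin (α (hd a))) (Fin (α (tl a))) ℂ) (σ : Vt → ℤ)
    (W₁ W₂ : ∀ x : Vt, Submodule ℂ (Fin (α x) → ℂ))
    (h₁ : IsWitness hd tl α M σ W₁) (h₂ : IsWitness hd tl α M σ W₂) :
    IsWitness hd tl α M σ (fun x => W₁ x ⊓ W₂ x) ∧
      IsWitness hd tl α M σ (fun x => W₁ x ⊔ W₂ x) := by
  obtain ⟨s₁, m₁⟩ := h₁
  obtain ⟨s₂, m₂⟩ := h₂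
  have sinf : IsSubrep hd tl α M (fun x => W₁ x ⊓ W₂ x) := by
    intro a v hv
    exact ⟨s₁ a v hv.1, s₂ a v hv.2⟩
  have ssup : IsSubrep hd tl α M (fun x => W₁ x ⊔ W₂ x) := by
    intro a v hv
    obtain ⟨v₁, hv₁, v₂, hv₂, rfl⟩ := Submodule.mem_sup.mp hv
    rw [Matrix.mulVec_add]
    exact Submodule.add_mem_sup (s₁ a v₁ hv₁) (s₂ a v₂ hv₂)
  have key : sval α σ (fun x => W₁ x ⊓ W₂ x) + sval α σ (fun x => W₁ x ⊔ W₂ x)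
      = sval α σ W₁ + sval α σ W₂ := by
    unfold sval
    rw [← Finset.sum_add_distrib, ← Finset.sum_add_distrib]
    apply Finset.sum_congr rfl
    intro x _
    have := Submodule.finrank_sup_add_finrank_inf_eq (W₁ x) (W₂ x)
    have h : ((finrank ℂ ↥(W₁ x ⊔ W₂ x) : ℤ) + (finrank ℂ ↥(W₁ x ⊓ W₂ x) : ℤ))
        = (finrank ℂ ↥(W₁ x) : ℤ) + (finrank ℂ ↥(W₂ x) : ℤ) := by exact_mod_cast this
    linear_combination σ x * h
  have le1 := m₁ _ sinf
  have le2 := m₁ _ ssup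
  have e1 : sval α σ W₂ ≤ sval α σ W₁ := m₁ _ s₂
  have e2 : sval α σ W₁ ≤ sval α σ W₂ := m₂ _ s₁
  have infeq : sval α σ (fun x => W₁ x ⊓ W₂ x) = sval α σ W₁ := by linarith
  have supeq : sval α σ (fun x => W₁ x ⊔ W₂ x) = sval α σ W₁ := by linarith
  exact ⟨⟨sinf, fun W' hW' => infeq ▸ m₁ _ hW'⟩, ⟨ssup, fun W' hW' => supeq ▸ m₁ _ hW'⟩⟩
end

section
/- If W is the minimal witness of (V, σ), then every morphism of representations from W to the quotient V/W is zero, i.e. Hom_Q(W, V/W) = 0. -/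
open Module

/-! For a morphism `φ : W → V/W`, both `K = ker φ` and `X = π⁻¹(im φ)` are subrepresentations of
`V`, with `σ(dim X) = σ(dim W) + σ(dim im φ)` and `σ(dim K) = σ(dim W) - σ(dim im φ)`. Maximality of
`W` forces `σ(dim im φ) ≤ 0`, so `K` is again a witness; minimality gives `W ≤ K`, i.e. `φ = 0`. -/

namespace Submodule

variable {K V Q : Type*} [DivisionRing K] [AddCommGroup V] [Module K V] [AddCommGroup Q]
  [Module K Q]

theorem eq_zero_of_le_map_subtype_ker {W : Submodule K V} {φ : W →ₗ[K] Q}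
    (h : W ≤ (LinearMap.ker φ).map W.subtype) : φ = 0 := by
  refine LinearMap.ker_eq_top.mp (map_injective_of_injective W.injective_subtype ?_)
  exact le_antisymm (map_mono le_top) (by rwa [map_subtype_top])

variable [FiniteDimensional K V]

theorem finrank_map_subtype_ker_add_finrank_range (W : Submodule K V) (φ : W →ₗ[K] Q) :
    finrank K ((LinearMap.ker φ).map W.subtype) + finrank K (LinearMap.range φ) =
      finrank K W := by
  rw [finrank_map_subtype_eq, add_comm, LinearMap.finrank_range_add_finrank_ker]

theorem finrank_comap_mkQ (W : Submodule K V) (U : Submodule K (V ⧸ W)) :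
    finrank K (U.comap W.mkQ) = finrank K W + finrank K U := by
  set f := W.mkQ.domRestrict (U.comap W.mkQ)
  have hrange : LinearMap.range f = U := by
    rw [LinearMap.range_domRestrict, map_comap_eq, range_mkQ, top_inf_eq]
  have hker : finrank K (LinearMap.ker f) = finrank K W := by
    rw [LinearMap.ker_domRestrict, ker_mkQ]
    exact (comapSubtypeEquivOfLe (le_comap_mkQ W U)).finrank_eq
  have := LinearMap.finrank_range_add_finrank_ker f
  rw [hrange, hker] at this
  omega

end Submodule

section QuiverRep

variable {Vt At : Type} {hd tl : At → Vt} {α : Vt → ℕ}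
  {M : ∀ a : At, Matrix (Fin (α (hd a))) (Fin (α (tl a))) ℂ}
  {W : ∀ x : Vt, Submodule ℂ (Fin (α x) → ℂ)}

def IsHomToQuotient (hW : IsSubrep hd tl α M W)
    (φ : ∀ x : Vt, W x →ₗ[ℂ] ((Fin (α x) → ℂ) ⧸ W x)) : Prop :=
  ∀ a : At, ∀ v : W (tl a),
    φ (hd a) ⟨(M a).mulVec v, hW a v v.2⟩ =
      Submodule.mapQ (W (tl a)) (W (hd a)) (M a).mulVecLin (fun u hu => hW a u hu) (φ (tl a) v)

variable {hW : IsSubrep hd tl α M W} {φ : ∀ x : Vt, W x →ₗ[ℂ] ((Fin (α x) → ℂ) ⧸ W x)}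

theorem IsHomToQuotient.isSubrep_map_subtype_ker (hφ : IsHomToQuotient hW φ) :
    IsSubrep hd tl α M fun x => (LinearMap.ker (φ x)).map (W x).subtype := by
  rintro a _ ⟨w, hw, rfl⟩
  refine ⟨⟨(M a).mulVec w, hW a w w.2⟩, ?_, rfl⟩
  rw [SetLike.mem_coe, LinearMap.mem_ker] at hw ⊢
  rw [hφ a w, hw, map_zero]

theorem IsHomToQuotient.isSubrep_comap_mkQ_range (hφ : IsHomToQuotient hW φ) :
    IsSubrep hd tl α M fun x => (LinearMap.range (φ x)).comap (W x).mkQ := by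
  rintro a v ⟨w, hw⟩
  refine ⟨⟨(M a).mulVec w, hW a w w.2⟩, ?_⟩
  rw [hφ a w, hw]
  rfl

end QuiverRep

theorem sval_eq_add_of_finrank_eq {Vt : Type} [Fintype Vt] {α : Vt → ℕ} (σ : Vt → ℤ)
    {W X : ∀ x : Vt, Submodule ℂ (Fin (α x) → ℂ)} (d : Vt → ℕ)
    (h : ∀ x, finrank ℂ (X x) = finrank ℂ (W x) + d x) :
    sval α σ X = sval α σ W + ∑ x, σ x * d x := by
  simp only [sval, h, ← Finset.sum_add_distrib]
  push_cast
  ring_nf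

theorem hom_minimal_witness_quotient_eq_zero_general {Vt At : Type} [Fintype Vt]
    (hd tl : At → Vt) (α : Vt → ℕ)
    (M : ∀ a : At, Matrix (Fin (α (hd a))) (Fin (α (tl a))) ℂ) (σ : Vt → ℤ)
    (W : ∀ x : Vt, Submodule ℂ (Fin (α x) → ℂ))
    (hwit : IsWitness hd tl α M σ W)
    (hmin : ∀ W', IsWitness hd tl α M σ W' → ∀ x, W x ≤ W' x)
    (φ : ∀ x : Vt, W x →ₗ[ℂ] ((Fin (α x) → ℂ) ⧸ W x))
    (hφ : ∀ a : At, ∀ v : W (tl a),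
      φ (hd a) ⟨(M a).mulVec v, hwit.1 a v v.2⟩ =
        Submodule.mapQ (W (tl a)) (W (hd a)) (M a).mulVecLin
          (fun u hu => hwit.1 a u hu) (φ (tl a) v)) :
    ∀ x, φ x = 0 := by
  have hφ : IsHomToQuotient hwit.1 φ := hφ
  set K := fun x => (LinearMap.ker (φ x)).map (W x).subtype
  set X := fun x => (LinearMap.range (φ x)).comap (W x).mkQ
  set r := fun x => finrank ℂ (LinearMap.range (φ x))
  have hX : sval α σ X = sval α σ W + ∑ x, σ x * r x :=
    sval_eq_add_of_finrank_eq σ r fun x => Submodule.finrank_comap_mkQ (W x) _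
  have hW : sval α σ W = sval α σ K + ∑ x, σ x * r x :=
    sval_eq_add_of_finrank_eq σ r fun x =>
      (Submodule.finrank_map_subtype_ker_add_finrank_range (W x) (φ x)).symm
  have hKwit : IsWitness hd tl α M σ K :=
    ⟨hφ.isSubrep_map_subtype_ker, fun W' hW' => (hwit.2 W' hW').trans <| by
      linarith [hwit.2 X hφ.isSubrep_comap_mkQ_range]⟩
  exact fun x => Submodule.eq_zero_of_le_map_subtype_ker (hmin K hKwit x)

/-- If `W` is the minimal witness of `(V,σ)` then every morphism of
representations `W → V/W` is zero, i.e. `Hom_Q(W, V/W) = 0`. -/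
theorem hom_minimal_witness_quotient_eq_zero {Vt At : Type} [Fintype Vt] [Fintype At]
    (hd tl : At → Vt) (α : Vt → ℕ)
    (M : ∀ a : At, Matrix (Fin (α (hd a))) (Fin (α (tl a))) ℂ) (σ : Vt → ℤ)
    (W : ∀ x : Vt, Submodule ℂ (Fin (α x) → ℂ))
    (hwit : IsWitness hd tl α M σ W)
    (hmin : ∀ W', IsWitness hd tl α M σ W' → ∀ x, W x ≤ W' x)
    (φ : ∀ x : Vt, W x →ₗ[ℂ] ((Fin (α x) → ℂ) ⧸ W x))
    (hφ : ∀ a : At, ∀ v : W (tl a),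
      φ (hd a) ⟨(M a).mulVec v, hwit.1 a v v.2⟩ =
        Submodule.mapQ (W (tl a)) (W (hd a)) (M a).mulVecLin
          (fun u hu => hwit.1 a u hu) (φ (tl a) v)) :
    ∀ x, φ x = 0 :=
  hom_minimal_witness_quotient_eq_zero_general hd tl α M σ W hwit hmin φ hφ
end

section
/- For any representations V of dimension α and W of dimension β of a quiver Q, the Euler–Ringel form satisfies ⟨α,β⟩ = dim Hom_Q(V,W) − dim Ext_Q(V,W). -/
open Module

/-- The linear map `d_W^V : ∏_x Mat_{β(x),α(x)} → ∏_a Mat_{β(ha),α(ta)}`,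
`φ ↦ (φ(ha) V(a) − W(a) φ(ta))_a`. Its kernel is `Hom_Q(V,W)` and its
cokernel is `Ext_Q(V,W)`. -/
noncomputable def dMap {Vt At : Type} (hd tl : At → Vt) (α β : Vt → ℕ)
    (V : ∀ a : At, Matrix (Fin (α (hd a))) (Fin (α (tl a))) ℂ)
    (W : ∀ a : At, Matrix (Fin (β (hd a))) (Fin (β (tl a))) ℂ) :
    (∀ x : Vt, Matrix (Fin (β x)) (Fin (α x)) ℂ) →ₗ[ℂ]
      (∀ a : At, Matrix (Fin (β (hd a))) (Fin (α (tl a))) ℂ) where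
  toFun φ := fun a => φ (hd a) * V a - W a * φ (tl a)
  map_add' φ ψ := by
    funext a
    simp [Matrix.add_mul, Matrix.mul_add]
    abel
  map_smul' c φ := by
    funext a
    simp [Matrix.smul_mul, Matrix.mul_smul, smul_sub]

/-- The Euler–Ringel form equals `dim Hom_Q(V,W) − dim Ext_Q(V,W)`. -/
theorem euler_form_eq_hom_sub_ext {Vt At : Type} [Fintype Vt] [Fintype At]
    (hd tl : At → Vt) (α β : Vt → ℕ)
    (V : ∀ a : At, Matrix (Fin (α (hd a))) (Fin (α (tl a))) ℂ)
    (W : ∀ a : At, Matrix (Fin (β (hd a))) (Fin (β (tl a))) ℂ) :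
    (∑ x, (α x : ℤ) * β x) - ∑ a, (α (tl a) : ℤ) * β (hd a) =
      (Module.finrank ℂ (LinearMap.ker (dMap hd tl α β V W)) : ℤ) -
        (Module.finrank ℂ
          ((∀ a : At, Matrix (Fin (β (hd a))) (Fin (α (tl a))) ℂ) ⧸
            LinearMap.range (dMap hd tl α β V W)) : ℤ) := by
  have hq := Submodule.finrank_quotient_add_finrank (LinearMap.range (dMap hd tl α β V W))
  have hk := LinearMap.finrank_range_add_finrank_ker (dMap hd tl α β V W)
  have hdom : finrank ℂ (∀ x : Vt, Matrix (Fin (β x)) (Fin (α x)) ℂ) = ∑ x, α x * β x := by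
    simp [Module.finrank_pi_fintype, Module.finrank_matrix, Nat.mul_comm]
  have hcod : finrank ℂ (∀ a : At, Matrix (Fin (β (hd a))) (Fin (α (tl a))) ℂ)
      = ∑ a, α (tl a) * β (hd a) := by
    simp [Module.finrank_pi_fintype, Module.finrank_matrix, Nat.mul_comm]
  rw [hdom] at hk
  rw [hcod] at hq
  have hq' : ((finrank ℂ (((a : At) → Matrix (Fin (β (hd a))) (Fin (α (tl a))) ℂ) ⧸ LinearMap.range (dMap hd tl α β V W)) : ℤ)) + (finrank ℂ (LinearMap.range (dMap hd tl α β V W)) : ℤ) = ∑ a : At, (α (tl a) : ℤ) * β (hd a) := by exact_mod_cast congrArg (Nat.cast : ℕ → ℤ) hq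
  have hk' : ((finrank ℂ (LinearMap.range (dMap hd tl α β V W)) : ℤ)) + (finrank ℂ (LinearMap.ker (dMap hd tl α β V W)) : ℤ) = ∑ x : Vt, (α x : ℤ) * β x := by exact_mod_cast congrArg (Nat.cast : ℕ → ℤ) hk
  linarith
end

section
/- If (α_i)_{i∈[r]} is a generic filtration dimension for α = ∑ α_i (i.e. every representation of dimension α admits a filtration of dimension (α_i)), then ∑_{i<j} ⟨α_i, α_j⟩ ≥ 0, where ⟨·,·⟩ is the Euler–Ringel form of Q. -/
open Module

/-- `F` is a filtration `0 = F₀ ⊆ F₁ ⊆ … ⊆ F_r = V` of subrepresentations of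
`M` with `dim F_i − dim F_{i−1} = αs i`. -/
def IsQuiverRepFiltration {Vt At : Type} (hd tl : At → Vt) (α : Vt → ℕ)
    (M : ∀ a : At, Matrix (Fin (α (hd a))) (Fin (α (tl a))) ℂ)
    {r : ℕ} (αs : Fin r → Vt → ℕ)
    (F : Fin (r + 1) → ∀ x : Vt, Submodule ℂ (Fin (α x) → ℂ)) : Prop :=
  (∀ i, IsSubrep hd tl α M (F i)) ∧
  (∀ i j : Fin (r + 1), i ≤ j → ∀ x, F i x ≤ F j x) ∧
  (∀ x, F 0 x = ⊥) ∧ (∀ x, F (Fin.last r) x = ⊤) ∧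
  (∀ i : Fin r, ∀ x,
    Module.finrank ℂ (F i.succ x) = Module.finrank ℂ (F i.castSucc x) + αs i x)

/-- `M` admits a filtration of dimension `(αs i)`. -/
def HasFiltration {Vt At : Type} (hd tl : At → Vt) (α : Vt → ℕ)
    (M : ∀ a : At, Matrix (Fin (α (hd a))) (Fin (α (tl a))) ℂ)
    {r : ℕ} (αs : Fin r → Vt → ℕ) : Prop :=
  ∃ F, IsQuiverRepFiltration hd tl α M αs F
/-- The Euler–Ringel form `⟨β,γ⟩ = ∑_x β(x)γ(x) − ∑_a β(ta)γ(ha)`. -/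
def eulerForm {Vt At : Type} [Fintype Vt] [Fintype At] (hd tl : At → Vt)
    (β γ : Vt → ℕ) : ℤ :=
  ∑ x, (β x : ℤ) * γ x - ∑ a, (β (tl a) : ℤ) * γ (hd a)

/-!
Suppose the Euler sum were negative. At each vertex, a basis adapted to the filtration can be put
in reduced echelon form. The positions of its pivots (the "levels" of the coordinates) take finitely
many values, and for fixed levels the basis consists of the columns of a unit lower block triangular
matrix `g`; in these bases a filtration-stable representation is `g T g⁻¹` with `T` block upper
triangular. So `Rep_α(Q)` is covered by the images of finitely many polynomial maps
`(g, T) ↦ g T g⁻¹`, each defined on a space of dimension `dim Rep_α(Q) + ∑_{i<j} ⟨α_i, α_j⟩`,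
which is impossible by a Hausdorff-dimension count.
-/

open scoped Finset

theorem Fin.exists_castSucc_lt_iff_of_monotone {r : ℕ} {P : Fin (r + 1) → Prop} (hP : Monotone P)
    (h0 : ¬ P 0) (hlast : P (Fin.last r)) : ∃ l : Fin r, ∀ i, P i ↔ l.castSucc < i := by
  classical
  let i₀ := (Finset.univ.filter P).min' ⟨_, Finset.mem_filter.2 ⟨Finset.mem_univ _, hlast⟩⟩
  have hi₀ : P i₀ := (Finset.mem_filter.1 (Finset.min'_mem _ _)).2
  have hne : i₀ ≠ 0 := fun h => h0 (h ▸ hi₀)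
  refine ⟨i₀.pred hne, fun i => ?_⟩
  rw [Fin.castSucc_pred_lt_iff]
  exact ⟨fun hi => Finset.min'_le _ _ (Finset.mem_filter.2 ⟨Finset.mem_univ _, hi⟩),
    fun hi => hP hi hi₀⟩

theorem card_filter_castSucc_lt_succ {P : Type*} [Fintype P] {r : ℕ} (ℓ : P → Fin r) (i : Fin r) :
    #{p | (ℓ p).castSucc < i.succ} = #{p | (ℓ p).castSucc < i.castSucc} + #{p | ℓ p = i} := by
  classical
  rw [← Finset.card_union_of_disjoint (Finset.disjoint_filter.2 fun p _ h => (ne_of_lt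
    (Fin.castSucc_lt_castSucc_iff.1 h))), ← Finset.filter_or]
  congr 1
  ext p
  simp only [Finset.mem_filter, Finset.mem_univ, true_and, Fin.castSucc_lt_succ_iff,
    Fin.castSucc_lt_castSucc_iff, le_iff_lt_or_eq]

theorem card_subtype_snd_lt_fst {P Q β : Type*} [Fintype P] [Fintype Q] [Fintype β] [LinearOrder β]
    (f : P → β) (g : Q → β) :
    Fintype.card {z : Q × P // f z.2 < g z.1} =
      ∑ i, ∑ j, if i < j then #{p | f p = i} * #{q | g q = j} else 0 := by
  classical
  rw [Fintype.card_subtype, Finset.card_eq_sum_card_fiberwise (f := fun z : Q × P => (f z.2, g z.1))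
    (t := Finset.univ.filter fun ij : β × β => ij.1 < ij.2) (fun z hz => by simpa using hz),
    Finset.sum_filter, Fintype.sum_prod_type]
  refine Finset.sum_congr rfl fun i _ => Finset.sum_congr rfl fun j _ => ?_
  split_ifs with hij
  · rw [mul_comm, ← Finset.card_product]
    congr 1
    ext ⟨q, p⟩
    simp only [Finset.mem_filter, Finset.mem_univ, true_and, Finset.mem_product, Prod.mk.injEq]
    constructor
    · rintro ⟨-, rfl, rfl⟩; exact ⟨rfl, rfl⟩
    · rintro ⟨rfl, rfl⟩; exact ⟨hij, rfl, rfl⟩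
  · rfl

theorem sum_ite_lt_eulerForm {Vt At : Type} [Fintype Vt] [Fintype At] (hd tl : At → Vt) {r : ℕ}
    (βs : Fin r → Vt → ℕ) :
    ∑ i : Fin r, ∑ j : Fin r, (if i < j then eulerForm hd tl (βs i) (βs j) else 0) =
      ∑ x, ((∑ i, ∑ j, if i < j then βs i x * βs j x else 0 : ℕ) : ℤ) -
        ∑ a, ((∑ i, ∑ j, if i < j then βs i (tl a) * βs j (hd a) else 0 : ℕ) : ℤ) := by
  push_cast
  rw [Finset.sum_comm (γ := Vt), Finset.sum_comm (γ := At), ← Finset.sum_sub_distrib]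
  refine Finset.sum_congr rfl fun i _ => ?_
  rw [Finset.sum_comm (γ := Vt), Finset.sum_comm (γ := At), ← Finset.sum_sub_distrib]
  refine Finset.sum_congr rfl fun j _ => ?_
  split_ifs <;> simp [eulerForm]

section Pivots

variable {K ι : Type*} [Field K] [Fintype ι] [LinearOrder ι]

theorem exists_leading_coord_of_ne_zero {v : ι → K} (hv : v ≠ 0) :
    ∃ q, v q ≠ 0 ∧ ∀ j < q, v j = 0 := by
  classical
  have hne : (Finset.univ.filter fun j => v j ≠ 0).Nonempty :=
    let ⟨j, hj⟩ := Function.ne_iff.1 hv; ⟨j, by simpa using hj⟩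
  refine ⟨_, (Finset.mem_filter.1 (Finset.min'_mem _ hne)).2, fun j hj => ?_⟩
  by_contra h
  exact hj.not_ge (Finset.min'_le _ _ (by simpa using h))

open Classical in
noncomputable def pivots (W : Submodule K (ι → K)) : Finset ι :=
  {q | ∃ v ∈ W, v q ≠ 0 ∧ ∀ j < q, v j = 0}

theorem mem_pivots {W : Submodule K (ι → K)} {q : ι} :
    q ∈ pivots W ↔ ∃ v ∈ W, v q ≠ 0 ∧ ∀ j < q, v j = 0 := by
  simp [pivots]

theorem pivots_mono {W W' : Submodule K (ι → K)} (h : W ≤ W') : pivots W ⊆ pivots W' :=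
  fun _ hq => let ⟨v, hv, hvq⟩ := mem_pivots.1 hq; mem_pivots.2 ⟨v, h hv, hvq⟩

@[simp]
theorem pivots_bot : pivots (⊥ : Submodule K (ι → K)) = ∅ := by
  ext q
  simp [mem_pivots]

@[simp]
theorem pivots_top [DecidableEq ι] : pivots (⊤ : Submodule K (ι → K)) = Finset.univ :=
  Finset.eq_univ_of_forall fun q =>
    mem_pivots.2 ⟨Pi.single q 1, trivial, by simp, fun _ hj => Pi.single_eq_of_ne hj.ne 1⟩

noncomputable def restrictPivots (W : Submodule K (ι → K)) : W →ₗ[K] (pivots W → K) :=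
  LinearMap.funLeft K K Subtype.val ∘ₗ W.subtype

theorem restrictPivots_injective (W : Submodule K (ι → K)) :
    Function.Injective (restrictPivots W) := by
  rw [← LinearMap.ker_eq_bot, LinearMap.ker_eq_bot']
  intro v hv
  by_contra hne
  obtain ⟨q, hq, hlead⟩ := exists_leading_coord_of_ne_zero (Subtype.coe_ne_coe.2 hne)
  exact hq (congrFun hv ⟨q, mem_pivots.2 ⟨v, v.2, hq, hlead⟩⟩)

theorem card_pivots_le_finrank (W : Submodule K (ι → K)) : #(pivots W) ≤ finrank K W := by
  choose w hwW hwq hwlt using fun q : pivots W => mem_pivots.1 q.2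
  let A : Matrix (pivots W) (pivots W) K := Matrix.of fun q q' => w q q'
  have hdet : A.det ≠ 0 := by
    rw [Matrix.det_of_isUpperTriangular (M := A) fun q q' h => hwlt q q' h]
    exact Finset.prod_ne_zero_iff.2 fun q _ => hwq q
  have hli : LinearIndependent K fun q => (⟨w q, hwW q⟩ : W) :=
    .of_comp (restrictPivots W) (Matrix.linearIndependent_rows_of_det_ne_zero hdet)
  simpa using hli.fintype_card_le_finrank

theorem card_pivots (W : Submodule K (ι → K)) : #(pivots W) = finrank K W := by
  refine (card_pivots_le_finrank W).antisymm ?_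
  simpa using LinearMap.finrank_le_finrank_of_injective (restrictPivots_injective W)

theorem exists_mem_eq_single_on_pivots [DecidableEq ι] {W : Submodule K (ι → K)} {p : ι}
    (hp : p ∈ pivots W) : ∃ v ∈ W, ∀ q ∈ pivots W, v q = if q = p then 1 else 0 := by
  have hsurj : Function.Surjective (restrictPivots W) :=
    (LinearMap.injective_iff_surjective_of_finrank_eq_finrank (by simp [card_pivots])).1
      (restrictPivots_injective W)
  obtain ⟨v, hv⟩ := hsurj (Pi.single ⟨p, hp⟩ 1)
  refine ⟨v, v.2, fun q hq => ?_⟩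
  have := congrFun hv ⟨q, hq⟩
  simp only [restrictPivots, LinearMap.coe_comp, Function.comp_apply, Submodule.coe_subtype,
    LinearMap.funLeft_apply] at this
  simp [this, Pi.single_apply]

end Pivots

section UnitLower

variable {R ι : Type*} [CommRing R] [DecidableEq ι] {r : ℕ}

abbrev LowerEntries (ℓ : ι → Fin r) : Type _ := {qp : ι × ι // ℓ qp.2 < ℓ qp.1}

def blockLowerPart (ℓ : ι → Fin r) (θ : LowerEntries ℓ → R) : Matrix ι ι R :=
  Matrix.of fun q p => if h : ℓ p < ℓ q then θ ⟨(q, p), h⟩ else 0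

def unitLower (ℓ : ι → Fin r) (θ : LowerEntries ℓ → R) : Matrix ι ι R :=
  1 + blockLowerPart ℓ θ

theorem unitLower_apply_of_not_lt (ℓ : ι → Fin r) (θ : LowerEntries ℓ → R) {q p : ι}
    (h : ¬ ℓ p < ℓ q) : unitLower ℓ θ q p = (1 : Matrix ι ι R) q p := by
  simp [unitLower, blockLowerPart, h]

theorem unitLower_apply_of_lt (ℓ : ι → Fin r) (θ : LowerEntries ℓ → R) {q p : ι}
    (h : ℓ p < ℓ q) : unitLower ℓ θ q p = θ ⟨(q, p), h⟩ := by
  simp [unitLower, blockLowerPart, h, Matrix.one_apply_ne (show q ≠ p by rintro rfl; exact h.false)]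

variable [Fintype ι]

def unitLowerInv (ℓ : ι → Fin r) (θ : LowerEntries ℓ → R) : Matrix ι ι R :=
  ∑ k ∈ Finset.range r, (-blockLowerPart ℓ θ) ^ k

theorem blockLowerPart_pow_apply_eq_zero (ℓ : ι → Fin r) (θ : LowerEntries ℓ → R) (k : ℕ)
    {q p : ι} (h : (ℓ q : ℕ) < ℓ p + k) : (blockLowerPart ℓ θ ^ k) q p = 0 := by
  induction k generalizing q with
  | zero => simp [Matrix.one_apply_ne (show q ≠ p by rintro rfl; omega)]
  | succ k ih =>
    rw [pow_succ', Matrix.mul_apply]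
    refine Finset.sum_eq_zero fun j _ => ?_
    by_cases hj : ℓ j < ℓ q
    · rw [ih (by omega), mul_zero]
    · simp [blockLowerPart, hj]

theorem blockLowerPart_pow_eq_zero (ℓ : ι → Fin r) (θ : LowerEntries ℓ → R) :
    blockLowerPart ℓ θ ^ r = 0 := by
  ext q p
  exact blockLowerPart_pow_apply_eq_zero ℓ θ r (by omega)

theorem unitLower_mul_unitLowerInv (ℓ : ι → Fin r) (θ : LowerEntries ℓ → R) :
    unitLower ℓ θ * unitLowerInv ℓ θ = 1 := by
  have := mul_neg_geom_sum (-blockLowerPart ℓ θ) r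
  rwa [neg_pow, blockLowerPart_pow_eq_zero, mul_zero, sub_zero, sub_neg_eq_add] at this

theorem unitLowerInv_mul_unitLower (ℓ : ι → Fin r) (θ : LowerEntries ℓ → R) :
    unitLowerInv ℓ θ * unitLower ℓ θ = 1 := by
  have := geom_sum_mul_neg (-blockLowerPart ℓ θ) r
  rwa [neg_pow, blockLowerPart_pow_eq_zero, mul_zero, sub_zero, sub_neg_eq_add] at this

theorem isUnit_unitLower (ℓ : ι → Fin r) (θ : LowerEntries ℓ → R) : IsUnit (unitLower ℓ θ) :=
  ⟨⟨_, _, unitLower_mul_unitLowerInv ℓ θ, unitLowerInv_mul_unitLower ℓ θ⟩, rfl⟩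

end UnitLower

section BlockUpper

variable {R ι κ : Type*} [Zero R] {r : ℕ}

abbrev UpperEntries (ℓ : ι → Fin r) (ℓ' : κ → Fin r) : Type _ := {qp : ι × κ // ℓ qp.1 ≤ ℓ' qp.2}

def blockUpper (ℓ : ι → Fin r) (ℓ' : κ → Fin r) (τ : UpperEntries ℓ ℓ' → R) : Matrix ι κ R :=
  Matrix.of fun q p => if h : ℓ q ≤ ℓ' p then τ ⟨(q, p), h⟩ else 0

theorem blockUpper_entries_eq_self {ℓ : ι → Fin r} {ℓ' : κ → Fin r} {T : Matrix ι κ R}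
    (hT : ∀ q p, ℓ' p < ℓ q → T q p = 0) : blockUpper ℓ ℓ' (fun e => T e.1.1 e.1.2) = T := by
  ext q p
  by_cases h : ℓ q ≤ ℓ' p
  · simp [blockUpper, h]
  · simp [blockUpper, h, hT q p (not_le.1 h)]

theorem card_upperEntries_add_card_lt [Fintype ι] [Fintype κ] (ℓ : ι → Fin r) (ℓ' : κ → Fin r) :
    Fintype.card (UpperEntries ℓ ℓ') + Fintype.card {qp : ι × κ // ℓ' qp.2 < ℓ qp.1} =
      Fintype.card ι * Fintype.card κ := by
  simp_rw [Fintype.card_subtype, ← not_le, Finset.card_filter_add_card_filter_not,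
    Finset.card_univ, Fintype.card_prod]

end BlockUpper

open Matrix in
theorem Matrix.mulVec_apply_eq_zero_of_mem_span_col {R ι : Type*} [CommRing R] [Fintype ι]
    [DecidableEq ι] {A B : Matrix ι ι R} (hBA : B * A = 1) {P : ι → Prop} {w : ι → R}
    (hw : w ∈ Submodule.span R (Set.range fun p : {p // P p} => A.col p)) {q : ι} (hq : ¬ P q) :
    (B *ᵥ w) q = 0 := by
  induction hw using Submodule.span_induction with
  | mem v hv =>
    obtain ⟨p, rfl⟩ := hv
    dsimp only
    rw [← Matrix.mulVec_single_one, Matrix.mulVec_mulVec, hBA, Matrix.one_mulVec,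
      Pi.single_eq_of_ne (by rintro rfl; exact hq p.2)]
  | zero => simp
  | add v v' _ _ hv hv' => simp [Matrix.mulVec_add, hv, hv']
  | smul a v _ hv => simp [Matrix.mulVec_smul, hv]

theorem exists_unitLower_span_col_eq {K ι : Type*} [Field K] [Fintype ι] [LinearOrder ι] {r : ℕ}
    {W : Fin (r + 1) → Submodule K (ι → K)} (hW : Monotone W) (h0 : W 0 = ⊥)
    (hlast : W (Fin.last r) = ⊤) :
    ∃ (ℓ : ι → Fin r) (θ : LowerEntries ℓ → K),
      (∀ i, finrank K (W i) = #{p | (ℓ p).castSucc < i}) ∧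
      ∀ i, W i = Submodule.span K
        (Set.range fun p : {p // (ℓ p).castSucc < i} => (unitLower ℓ θ).col p) := by
  classical
  choose ℓ hℓ using fun p : ι => Fin.exists_castSucc_lt_iff_of_monotone
    (P := fun i => p ∈ pivots (W i)) (fun _ _ h hp => pivots_mono (hW h) hp) (by simp [h0])
    (by simp [hlast])
  choose v hvW hv using fun p =>
    exists_mem_eq_single_on_pivots ((hℓ p (ℓ p).succ).2 Fin.castSucc_lt_succ)
  let θ : LowerEntries ℓ → K := fun e => v e.1.2 e.1.1
  have hcol : ∀ p, (unitLower ℓ θ).col p = v p := by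
    intro p
    ext q
    by_cases h : ℓ p < ℓ q
    · exact unitLower_apply_of_lt ℓ θ h
    · -- every `q` of level at most `ℓ p` is a pivot of `W (ℓ p).succ`
      rw [Matrix.col_apply, unitLower_apply_of_not_lt ℓ θ h,
        hv p q ((hℓ q _).2 (Fin.castSucc_lt_succ_iff.2 (not_lt.1 h))), Matrix.one_apply]
  have hcard : ∀ i, finrank K (W i) = #{p | (ℓ p).castSucc < i} := by
    intro i
    rw [← card_pivots]
    congr 1
    ext p
    simp [hℓ]
  refine ⟨ℓ, θ, hcard, fun i => ?_⟩
  symm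
  apply Submodule.eq_of_le_of_finrank_le
  · rw [Submodule.span_le]
    rintro _ ⟨p, rfl⟩
    dsimp only
    rw [hcol]
    exact hW (Fin.castSucc_lt_iff_succ_le.1 p.2) (hvW p)
  · have hli : LinearIndependent K fun p : {p // (ℓ p).castSucc < i} => (unitLower ℓ θ).col p :=
      (Matrix.linearIndependent_cols_iff_isUnit.2 (isUnit_unitLower ℓ θ)).comp
        _ Subtype.val_injective
    rw [finrank_span_eq_card hli, hcard, Fintype.card_subtype]

section EntrywiseContDiff

variable {𝕜 E 𝔸 : Type*} [NontriviallyNormedField 𝕜] [NormedAddCommGroup E] [NormedSpace 𝕜 E]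
  [NormedCommRing 𝔸] [NormedAlgebra 𝕜 𝔸] {n : WithTop ℕ∞}

theorem contDiff_matrix_mul_apply {l m o : Type*} [Fintype m] {A : E → Matrix l m 𝔸}
    {B : E → Matrix m o 𝔸} (hA : ∀ i j, ContDiff 𝕜 n fun z => A z i j)
    (hB : ∀ i j, ContDiff 𝕜 n fun z => B z i j) (i : l) (k : o) :
    ContDiff 𝕜 n fun z => (A z * B z) i k := by
  simp only [Matrix.mul_apply]
  exact ContDiff.sum fun j _ => (hA i j).mul (hB j k)

theorem contDiff_matrix_pow_apply {m : Type*} [Fintype m] [DecidableEq m] {A : E → Matrix m m 𝔸}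
    (hA : ∀ i j, ContDiff 𝕜 n fun z => A z i j) (k : ℕ) (i j : m) :
    ContDiff 𝕜 n fun z => (A z ^ k) i j := by
  induction k generalizing i j with
  | zero => simpa [Matrix.one_apply] using contDiff_const
  | succ k ih => simpa only [pow_succ] using contDiff_matrix_mul_apply ih hA i j

variable {ι κ : Type*} [Fintype ι] [Fintype κ] {r : ℕ}

theorem contDiff_blockLowerPart_apply {ℓ : ι → Fin r} {θ : E → LowerEntries ℓ → 𝔸}
    (hθ : ContDiff 𝕜 n θ) (q p : ι) : ContDiff 𝕜 n fun z => blockLowerPart ℓ (θ z) q p := by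
  by_cases h : ℓ p < ℓ q
  · simpa [blockLowerPart, h] using contDiff_pi.1 hθ _
  · simpa [blockLowerPart, h] using contDiff_const

theorem contDiff_blockUpper_apply {ℓ : ι → Fin r} {ℓ' : κ → Fin r}
    {τ : E → UpperEntries ℓ ℓ' → 𝔸} (hτ : ContDiff 𝕜 n τ) (q : ι) (p : κ) :
    ContDiff 𝕜 n fun z => blockUpper ℓ ℓ' (τ z) q p := by
  by_cases h : ℓ q ≤ ℓ' p
  · simpa [blockUpper, h] using contDiff_pi.1 hτ _
  · simpa [blockUpper, h] using contDiff_const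

variable [DecidableEq ι]

theorem contDiff_unitLower_apply {ℓ : ι → Fin r} {θ : E → LowerEntries ℓ → 𝔸}
    (hθ : ContDiff 𝕜 n θ) (q p : ι) : ContDiff 𝕜 n fun z => unitLower ℓ (θ z) q p := by
  simpa only [unitLower, Matrix.add_apply] using contDiff_const.add
    (contDiff_blockLowerPart_apply hθ q p)

theorem contDiff_unitLowerInv_apply {ℓ : ι → Fin r} {θ : E → LowerEntries ℓ → 𝔸}
    (hθ : ContDiff 𝕜 n θ) (q p : ι) : ContDiff 𝕜 n fun z => unitLowerInv ℓ (θ z) q p := by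
  simp only [unitLowerInv, Matrix.sum_apply]
  exact ContDiff.sum fun k _ => contDiff_matrix_pow_apply
    (fun i j => by simpa using (contDiff_blockLowerPart_apply hθ i j).neg) k q p

end EntrywiseContDiff

theorem iUnion_range_ne_univ_of_finrank_lt {ι : Type*} [Fintype ι] {E : ι → Type*}
    [∀ i, NormedAddCommGroup (E i)] [∀ i, NormedSpace ℝ (E i)] [∀ i, FiniteDimensional ℝ (E i)]
    {F : Type*} [NormedAddCommGroup F] [NormedSpace ℝ F] [FiniteDimensional ℝ F]
    (f : ∀ i, E i → F) (hf : ∀ i, ContDiff ℝ 1 (f i))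
    (hlt : ∀ i, finrank ℝ (E i) < finrank ℝ F) :
    ⋃ i, Set.range (f i) ≠ Set.univ := by
  intro hcov
  obtain ⟨i, -⟩ := Set.mem_iUnion.1 (hcov ▸ Set.mem_univ (0 : F))
  have hdim : dimH (⋃ i, Set.range (f i)) < finrank ℝ F := by
    rw [dimH_iUnion, ← Finset.sup_univ_eq_iSup,
      Finset.sup_lt_iff (bot_lt_iff_ne_bot.2 (by simpa using (hlt i).ne_bot))]
    exact fun i _ => (hf i).dimH_range_le.trans_lt (by exact_mod_cast hlt i)
  rw [hcov, Real.dimH_univ_eq_finrank] at hdim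
  exact hdim.false

abbrev Levels {Vt : Type} (α : Vt → ℕ) (r : ℕ) : Type := ∀ x, Fin (α x) → Fin r

section Charts

variable {Vt At : Type} (hd tl : At → Vt) (α : Vt → ℕ) {r : ℕ}

abbrev RepSpace : Type := ∀ a : At, Fin (α (hd a)) → Fin (α (tl a)) → ℂ

abbrev ChartDomain (c : Levels α r) : Type :=
  (∀ x, LowerEntries (c x) → ℂ) × (∀ a, UpperEntries (c (hd a)) (c (tl a)) → ℂ)

/-- A concrete form of the collapsing map `GL_α ×_{P(λ)} C⁺(λ) → Rep_α(Q)` over one cell of the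
flag variety: the levels `c` fix the position of the flag, `unitLower` moves the standard flag
to it, and `blockUpper` is the representation in the adapted basis. -/
noncomputable def chartMap (c : Levels α r) (z : ChartDomain hd tl α c) : RepSpace hd tl α :=
  fun a => unitLower (c (hd a)) (z.1 (hd a)) * blockUpper (c (hd a)) (c (tl a)) (z.2 a) *
    unitLowerInv (c (tl a)) (z.1 (tl a))

open Matrix in
theorem exists_chartMap_eq {αs : Fin r → Vt → ℕ}
    (M : ∀ a : At, Matrix (Fin (α (hd a))) (Fin (α (tl a))) ℂ)
    (hM : HasFiltration hd tl α M αs) :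
    ∃ c : Levels α r, (∀ x i, #{p | c x p = i} = αs i x) ∧ ∃ z, chartMap hd tl α c z = M := by
  classical
  obtain ⟨F, hsub, hmono, hbot, htop, hdim⟩ := hM
  choose ℓ θ hcard hspan using fun x => exists_unitLower_span_col_eq (W := fun i => F i x)
    (fun i j h => hmono i j h x) (hbot x) (htop x)
  refine ⟨ℓ, fun x i => ?_, ?_⟩
  · have := card_filter_castSucc_lt_succ (ℓ x) i
    rw [← hcard, ← hcard, hdim] at this
    omega
  set G := fun x => unitLower (ℓ x) (θ x)
  set Ginv := fun x => unitLowerInv (ℓ x) (θ x)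
  -- `M` preserves the filtration, so it is block upper triangular in the adapted bases
  have hT : ∀ a q p, ℓ (tl a) p < ℓ (hd a) q → (Ginv (hd a) * M a * G (tl a)) q p = 0 := by
    intro a q p hlt
    have hcol : (G (tl a)).col p ∈ F (ℓ (tl a) p).succ (tl a) := by
      rw [hspan]
      exact Submodule.subset_span ⟨⟨p, Fin.castSucc_lt_succ⟩, rfl⟩
    have hMcol := hsub _ a _ hcol
    rw [hspan] at hMcol
    change (Ginv (hd a) * M a * G (tl a)).col p q = 0
    rw [← mulVec_single_one, ← mulVec_mulVec, ← mulVec_mulVec, mulVec_single_one]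
    exact mulVec_apply_eq_zero_of_mem_span_col (unitLowerInv_mul_unitLower _ _) hMcol
      (by simpa using hlt)
  refine ⟨(θ, fun a e => (Ginv (hd a) * M a * G (tl a)) e.1.1 e.1.2), funext fun a => ?_⟩
  rw [chartMap, blockUpper_entries_eq_self (hT a), ← Matrix.mul_assoc, ← Matrix.mul_assoc,
    unitLower_mul_unitLowerInv, Matrix.one_mul, Matrix.mul_assoc, unitLower_mul_unitLowerInv,
    Matrix.mul_one]

variable [Fintype At]

theorem finrank_repSpace : finrank ℂ (RepSpace hd tl α) = ∑ a, α (hd a) * α (tl a) := by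
  simp [Module.finrank_pi_fintype]

variable [Fintype Vt]

theorem contDiff_chartMap {n : WithTop ℕ∞} (c : Levels α r) :
    ContDiff ℝ n (chartMap hd tl α c) := by
  have hθ : ∀ x, ContDiff ℝ n fun z : ChartDomain hd tl α c => z.1 x :=
    fun x => contDiff_pi.1 contDiff_fst x
  have hτ : ∀ a, ContDiff ℝ n fun z : ChartDomain hd tl α c => z.2 a :=
    fun a => contDiff_pi.1 contDiff_snd a
  refine contDiff_pi.2 fun a => contDiff_pi.2 fun q => contDiff_pi.2 fun p => ?_
  exact contDiff_matrix_mul_apply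
    (contDiff_matrix_mul_apply (contDiff_unitLower_apply (hθ _)) (contDiff_blockUpper_apply (hτ a)))
    (contDiff_unitLowerInv_apply (hθ _)) q p

theorem finrank_chartDomain (c : Levels α r) :
    finrank ℂ (ChartDomain hd tl α c) = ∑ x, Fintype.card (LowerEntries (c x)) +
      ∑ a, Fintype.card (UpperEntries (c (hd a)) (c (tl a))) := by
  simp [Module.finrank_prod, Module.finrank_pi_fintype]

theorem finrank_chartDomain_eq (αs : Fin r → Vt → ℕ) (c : Levels α r)
    (hc : ∀ x i, #{p | c x p = i} = αs i x) :
    (finrank ℂ (ChartDomain hd tl α c) : ℤ) = finrank ℂ (RepSpace hd tl α) +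
      ∑ i : Fin r, ∑ j : Fin r, if i < j then eulerForm hd tl (αs i) (αs j) else 0 := by
  have hlower : ∀ x, Fintype.card (LowerEntries (c x)) =
      ∑ i, ∑ j, if i < j then αs i x * αs j x else 0 := fun x => by
    rw [card_subtype_snd_lt_fst]
    simp only [hc]
  have hupper : ∀ a, (Fintype.card (UpperEntries (c (hd a)) (c (tl a))) : ℤ) =
      α (hd a) * α (tl a) - ∑ i, ∑ j, if i < j then αs i (tl a) * αs j (hd a) else 0 := by
    intro a
    have := card_upperEntries_add_card_lt (c (hd a)) (c (tl a))
    rw [card_subtype_snd_lt_fst] at this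
    simp only [hc, Fintype.card_fin] at this
    rw [eq_sub_iff_add_eq]
    exact_mod_cast this
  rw [finrank_chartDomain, finrank_repSpace, sum_ite_lt_eulerForm]
  push_cast
  simp only [hlower, hupper, Finset.sum_sub_distrib]
  push_cast
  ring

end Charts

theorem generic_filtration_euler_sum_nonneg_general {Vt At : Type} [Fintype Vt] [Fintype At]
    (hd tl : At → Vt) (α : Vt → ℕ) {r : ℕ} (αs : Fin r → Vt → ℕ)
    (hgen : ∀ M : ∀ a : At, Matrix (Fin (α (hd a))) (Fin (α (tl a))) ℂ,
      HasFiltration hd tl α M αs) :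
    0 ≤ ∑ i : Fin r, ∑ j : Fin r,
      if i < j then eulerForm hd tl (αs i) (αs j) else 0 := by
  classical
  by_contra! hneg
  let Charts := {c : Levels α r // ∀ x i, #{p | c x p = i} = αs i x}
  refine iUnion_range_ne_univ_of_finrank_lt (fun c : Charts => chartMap hd tl α c.1)
    (fun c => contDiff_chartMap hd tl α c.1) (fun c => ?_) ?_
  · rw [finrank_real_of_complex, finrank_real_of_complex]
    have := finrank_chartDomain_eq hd tl α αs c.1 c.2
    omega
  · refine Set.eq_univ_of_forall fun M => Set.mem_iUnion.2 ?_
    obtain ⟨c, hc, hM⟩ := exists_chartMap_eq hd tl α M (hgen M)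
    exact ⟨⟨c, hc⟩, hM⟩

/-- If `(α_i)` is a generic filtration dimension for `α = ∑ α_i` then
`∑_{i<j} ⟨α_i, α_j⟩ ≥ 0`. -/
theorem generic_filtration_euler_sum_nonneg {Vt At : Type} [Fintype Vt] [Fintype At]
    (hd tl : At → Vt) (α : Vt → ℕ) {r : ℕ} (αs : Fin r → Vt → ℕ)
    (hsum : ∀ x, α x = ∑ i, αs i x)
    (hgen : ∀ M : ∀ a : At, Matrix (Fin (α (hd a))) (Fin (α (tl a))) ℂ,
      HasFiltration hd tl α M αs) :
    0 ≤ ∑ i : Fin r, ∑ j : Fin r,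
      if i < j then eulerForm hd tl (αs i) (αs j) else 0 :=
  generic_filtration_euler_sum_nonneg_general hd tl α αs hgen
end

section
/- Let τ be an involution of Q, V a τ-symmetric representation of dimension α = τ·α, σ a weight with σ = −τ·σ, and W the minimal witness of (V,σ). Then the maximal witness of (V,σ) is W^⊥; in particular W is τ-isotropic (W ⊆ W^⊥), and for every vertex x fixed by τ, dim W(x) = 0. -/
/-!
For a `τ`-symmetric representation the arrow map `M a` is the adjoint of `M (τ a)` (up to
reindexing), so `U ↦ U^⊥` sends subrepresentations to subrepresentations, and
`dim U^⊥(x) = α(x) - dim U(τ x)` together with `σ = -τ·σ`, `α = τ·α` gives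
`σ(dim U^⊥) = σ(dim U)`. Thus `⊥` maps witnesses to witnesses and reverses inclusions.
Minimality gives `W ⊆ W'^⊥` for every witness `W'`, hence `W' ⊆ W'^⊥⊥ ⊆ W^⊥`; taking `W' = W^⊥`
gives `W ⊆ W^⊥`, and at a `τ`-fixed vertex this makes every vector of `W(x)` self-orthogonal.
-/

open Module

/-- `M` is `τ`-symmetric: `M(a) = M(τa)*` (conjugate transpose), entrywise. -/
def TauSymm {Vt At : Type} (hd tl : At → Vt) (α : Vt → ℕ)
    (τ₀ : Vt → Vt) (τ₁ : At → At)
    (hh : ∀ a, hd (τ₁ a) = τ₀ (tl a)) (ht : ∀ a, tl (τ₁ a) = τ₀ (hd a))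
    (hα : ∀ x, α (τ₀ x) = α x)
    (M : ∀ a : At, Matrix (Fin (α (hd a))) (Fin (α (tl a))) ℂ) : Prop :=
  ∀ a : At, ∀ (i : Fin (α (hd a))) (j : Fin (α (tl a))),
    M a i j =
      star (M (τ₁ a)
        (Fin.cast (((congrArg α (hh a)).trans (hα (tl a))).symm) j)
        (Fin.cast (((congrArg α (ht a)).trans (hα (hd a))).symm) i))

/-- Orthogonal complement of `W ⊆ ℂ^m` for the standard Hermitian product,
viewed in `ℂ^n` along an equality `m = n`. -/
noncomputable def perp {m n : ℕ} (h : m = n) (W : Submodule ℂ (Fin m → ℂ)) :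
    Submodule ℂ (Fin n → ℂ) where
  carrier := {v | ∀ w ∈ W, ∑ i : Fin m, star (w i) * v (Fin.cast h i) = 0}
  zero_mem' := by intro w hw; simp
  add_mem' := by
    intro a b ha hb w hw
    have h1 := ha w hw
    have h2 := hb w hw
    simp only [Pi.add_apply, mul_add, Finset.sum_add_distrib, h1, h2, add_zero]
  smul_mem' := by
    intro c v hv w hw
    have h0 := hv w hw
    calc ∑ i : Fin m, star (w i) * (c • v) (Fin.cast h i)
        = c * ∑ i : Fin m, star (w i) * v (Fin.cast h i) := by
          rw [Finset.mul_sum]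
          exact Finset.sum_congr rfl (fun i _ => by
            simp only [Pi.smul_apply, smul_eq_mul]; ring)
      _ = 0 := by rw [h0, mul_zero]

open Matrix
open scoped ComplexOrder

section Perp

variable {m n : ℕ}

theorem mem_perp_iff (h : m = n) (U : Submodule ℂ (Fin m → ℂ)) (v : Fin n → ℂ) :
    v ∈ perp h U ↔ ∀ w ∈ U, star w ⬝ᵥ (v ∘ Fin.cast h) = 0 :=
  Iff.rfl

theorem dotProduct_comp_cast (h : m = n) (x : Fin m → ℂ) (y : Fin n → ℂ) :
    x ⬝ᵥ (y ∘ Fin.cast h) = (x ∘ Fin.cast h.symm) ⬝ᵥ y := by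
  subst h; rfl

theorem perp_le_perp (h : m = n) {U U' : Submodule ℂ (Fin m → ℂ)} (hU : U ≤ U') :
    perp h U' ≤ perp h U :=
  fun _ hv w hw => hv w (hU hw)

theorem perp_rfl_eq (U : Submodule ℂ (Fin n → ℂ)) :
    perp rfl U = (U.map (WithLp.linearEquiv 2 ℂ (Fin n → ℂ)).symm.toLinearMap)ᗮ.comap
      (WithLp.linearEquiv 2 ℂ (Fin n → ℂ)).symm.toLinearMap := by
  ext v
  simp only [mem_perp_iff, Submodule.mem_comap, Submodule.mem_orthogonal, Submodule.mem_map,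
    EuclideanSpace.inner_eq_star_dotProduct]
  simp [dotProduct_comm]

theorem finrank_perp_add_finrank (h : m = n) (U : Submodule ℂ (Fin m → ℂ)) :
    finrank ℂ (perp h U) + finrank ℂ U = n := by
  subst h
  have :=
    (U.map (WithLp.linearEquiv 2 ℂ (Fin m → ℂ)).symm.toLinearMap).finrank_add_finrank_orthogonal
  rw [LinearEquiv.finrank_map_eq, finrank_euclideanSpace_fin] at this
  rw [perp_rfl_eq, Submodule.comap_equiv_eq_map_symm, LinearEquiv.finrank_map_eq]
  omega

theorem mem_perp_perp (h : m = n) (h' : n = m) {U : Submodule ℂ (Fin m → ℂ)} {u : Fin m → ℂ}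
    (hu : u ∈ U) : u ∈ perp h' (perp h U) := by
  subst h
  intro w hw
  change star w ⬝ᵥ (u ∘ Fin.cast h') = 0
  rw [star_dotProduct, star_eq_zero]
  exact hw u hu

theorem eq_bot_of_le_perp (h : n = n) {U : Submodule ℂ (Fin n → ℂ)} (hU : U ≤ perp h U) :
    U = ⊥ :=
  (Submodule.eq_bot_iff U).2 fun v hv => dotProduct_star_self_eq_zero.1 (hU hv v hv)

end Perp

theorem Matrix.star_dotProduct_conjTranspose_submatrix_mulVec {R ι κ ι' κ' : Type*}
    [CommSemiring R] [StarRing R] [Fintype ι] [Fintype κ] [Fintype ι'] [Fintype κ']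
    (B : Matrix κ' ι' R) (e : κ ≃ κ') (f : ι ≃ ι') (w : ι' → R) (v : κ → R) :
    star (w ∘ f) ⬝ᵥ ((B.submatrix e f)ᴴ *ᵥ v) = star ((B *ᵥ w) ∘ e) ⬝ᵥ v := by
  rw [dotProduct_mulVec, ← star_mulVec, submatrix_mulVec_equiv]
  simp [Function.comp_def]

section Quiver

variable {Vt At : Type} {hd tl : At → Vt} {α : Vt → ℕ} {τ₀ : Vt → Vt} {τ₁ : At → At}
  {hh : ∀ a, hd (τ₁ a) = τ₀ (tl a)} {ht : ∀ a, tl (τ₁ a) = τ₀ (hd a)}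
  {hα : ∀ x, α (τ₀ x) = α x} {M : ∀ a : At, Matrix (Fin (α (hd a))) (Fin (α (tl a))) ℂ}

theorem comp_cast_mem_of_eq (U : ∀ x, Submodule ℂ (Fin (α x) → ℂ)) {x y : Vt} (h : x = y)
    (e : α y = α x) {w : Fin (α x) → ℂ} (hw : w ∈ U x) : w ∘ Fin.cast e ∈ U y := by
  subst h
  exact hw

theorem TauSymm.eq_conjTranspose (hsym : TauSymm hd tl α τ₀ τ₁ hh ht hα M) (a : At) :
    M a = ((M (τ₁ a)).submatrix (finCongr ((congrArg α (hh a)).trans (hα (tl a))).symm)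
      (finCongr ((congrArg α (ht a)).trans (hα (hd a))).symm))ᴴ := by
  ext i j
  exact hsym a i j

variable (hα) in
noncomputable def tauPerp (U : ∀ x, Submodule ℂ (Fin (α x) → ℂ)) (x : Vt) :
    Submodule ℂ (Fin (α x) → ℂ) :=
  perp (hα x) (U (τ₀ x))

theorem isSubrep_tauPerp (hsym : TauSymm hd tl α τ₀ τ₁ hh ht hα M)
    {U : ∀ x, Submodule ℂ (Fin (α x) → ℂ)} (hU : IsSubrep hd tl α M U) :
    IsSubrep hd tl α M (tauPerp hα U) := by
  intro a v hv w hw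
  set w' := w ∘ Fin.cast (congrArg α (ht a))
  have hw' : w' ∈ U (tl (τ₁ a)) := comp_cast_mem_of_eq U (ht a).symm _ hw
  set z := (M (τ₁ a) *ᵥ w') ∘ Fin.cast (congrArg α (hh a)).symm
  have hz : z ∈ U (τ₀ (tl a)) := comp_cast_mem_of_eq U (hh a) _ (hU _ _ hw')
  calc star w ⬝ᵥ ((M a *ᵥ v) ∘ Fin.cast (hα (hd a)))
      = star (w' ∘ finCongr ((congrArg α (ht a)).trans (hα (hd a))).symm) ⬝ᵥ (M a *ᵥ v) :=
        dotProduct_comp_cast _ _ _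
    _ = star ((M (τ₁ a) *ᵥ w') ∘ finCongr ((congrArg α (hh a)).trans (hα (tl a))).symm)
          ⬝ᵥ v := by
        rw [hsym.eq_conjTranspose a]
        exact star_dotProduct_conjTranspose_submatrix_mulVec _ _ _ _ _
    _ = star z ⬝ᵥ (v ∘ Fin.cast (hα (tl a))) := by rw [dotProduct_comp_cast]; rfl
    _ = 0 := hv z hz

theorem sval_tauPerp [Fintype Vt] {σ : Vt → ℤ} (hτ₀ : Function.Involutive τ₀)
    (hσ : ∀ x, σ (τ₀ x) = -σ x) (U : ∀ x, Submodule ℂ (Fin (α x) → ℂ)) :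
    sval α σ (tauPerp hα U) = sval α σ U := by
  have hdim (x : Vt) : (finrank ℂ (tauPerp hα U x) : ℤ) = α x - finrank ℂ (U (τ₀ x)) := by
    have := finrank_perp_add_finrank (hα x) (U (τ₀ x))
    unfold tauPerp
    omega
  have hflip (f : Vt → ℤ) : ∑ x, σ x * f (τ₀ x) = -∑ x, σ x * f x := by
    rw [← Equiv.sum_comp (hτ₀.toPerm _) (fun x => σ x * f x)]
    simp [hσ]
  have hσα : ∑ x, σ x * (α x : ℤ) = 0 := by
    have := hflip (fun x => α x)
    simp only [hα] at this
    omega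
  have hσU := hflip (fun x => finrank ℂ (U x))
  simp only [sval, hdim, mul_sub, Finset.sum_sub_distrib, hσα] at hσU ⊢
  linarith

theorem isWitness_tauPerp [Fintype Vt] {σ : Vt → ℤ} (hsym : TauSymm hd tl α τ₀ τ₁ hh ht hα M)
    (hτ₀ : Function.Involutive τ₀) (hσ : ∀ x, σ (τ₀ x) = -σ x)
    {U : ∀ x, Submodule ℂ (Fin (α x) → ℂ)} (hU : IsWitness hd tl α M σ U) :
    IsWitness hd tl α M σ (tauPerp hα U) := by
  refine ⟨isSubrep_tauPerp hsym hU.1, fun U' hU' => ?_⟩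
  rw [sval_tauPerp hτ₀ hσ U]
  exact hU.2 U' hU'

theorem tauPerp_le_tauPerp {U U' : ∀ x, Submodule ℂ (Fin (α x) → ℂ)} (h : ∀ x, U x ≤ U' x)
    (x : Vt) : tauPerp hα U' x ≤ tauPerp hα U x :=
  perp_le_perp (hα x) (h (τ₀ x))

theorem le_tauPerp_tauPerp (hτ₀ : Function.Involutive τ₀)
    (U : ∀ x, Submodule ℂ (Fin (α x) → ℂ)) (x : Vt) : U x ≤ tauPerp hα (tauPerp hα U) x := by
  -- `τ₀ (τ₀ x)` occurs in the types involved, so it is generalized before being replaced by `x`.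
  have key : ∀ y, y = x → ∀ e : α y = α (τ₀ x), U x ≤ perp (hα x) (perp e (U y)) := by
    rintro y rfl e u hu
    exact mem_perp_perp e (hα y) hu
  exact key _ (hτ₀ x) _

theorem eq_bot_of_le_tauPerp {U : ∀ x, Submodule ℂ (Fin (α x) → ℂ)} {x : Vt} (hx : τ₀ x = x)
    (h : U x ≤ tauPerp hα U x) : U x = ⊥ := by
  have key : ∀ y, y = x → ∀ e : α y = α x, U x ≤ perp e (U y) → U x = ⊥ := by
    rintro y rfl e
    exact eq_bot_of_le_perp e
  exact key _ hx _ h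

end Quiver

theorem minimal_witness_perp_general {Vt At : Type} [Fintype Vt]
    (hd tl : At → Vt) (α : Vt → ℕ) (τ₀ : Vt → Vt) (τ₁ : At → At)
    (hτ₀ : ∀ x, τ₀ (τ₀ x) = x)
    (hh : ∀ a, hd (τ₁ a) = τ₀ (tl a)) (ht : ∀ a, tl (τ₁ a) = τ₀ (hd a))
    (hα : ∀ x, α (τ₀ x) = α x)
    (M : ∀ a : At, Matrix (Fin (α (hd a))) (Fin (α (tl a))) ℂ)
    (hsym : TauSymm hd tl α τ₀ τ₁ hh ht hα M)
    (σ : Vt → ℤ) (hσ : ∀ x, σ (τ₀ x) = -σ x)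
    (W : ∀ x : Vt, Submodule ℂ (Fin (α x) → ℂ))
    (hwit : IsWitness hd tl α M σ W)
    (hmin : ∀ W', IsWitness hd tl α M σ W' → ∀ x, W x ≤ W' x) :
    (IsWitness hd tl α M σ (fun x => perp (hα x) (W (τ₀ x))) ∧
      ∀ W', IsWitness hd tl α M σ W' →
        ∀ x, W' x ≤ perp (hα x) (W (τ₀ x))) ∧
    (∀ x, W x ≤ perp (hα x) (W (τ₀ x))) ∧
    (∀ x, τ₀ x = x → Module.finrank ℂ (W x) = 0) := by
  have hperp (U) (hU : IsWitness hd tl α M σ U) : IsWitness hd tl α M σ (tauPerp hα U) :=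
    isWitness_tauPerp hsym hτ₀ hσ hU
  have hiso : ∀ x, W x ≤ tauPerp hα W x := hmin _ (hperp W hwit)
  refine ⟨⟨hperp W hwit, fun W' hW' x => ?_⟩, hiso, fun x hx => ?_⟩
  · exact (le_tauPerp_tauPerp hτ₀ W' x).trans (tauPerp_le_tauPerp (hmin _ (hperp W' hW')) x)
  · exact Submodule.finrank_eq_zero.2 (eq_bot_of_le_tauPerp hx (hiso x))

/-- For a `τ`-symmetric representation `V` with `α = τ·α` and an
anti-invariant weight `σ = −τ·σ`, if `W` is the minimal witness of `(V,σ)`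
then `W^⊥` is the maximal witness; in particular `W` is `τ`-isotropic
(`W ⊆ W^⊥`) and `dim W(x) = 0` at every vertex fixed by `τ`. -/
theorem minimal_witness_perp {Vt At : Type} [Fintype Vt] [Fintype At]
    (hd tl : At → Vt) (α : Vt → ℕ) (τ₀ : Vt → Vt) (τ₁ : At → At)
    (hτ₀ : ∀ x, τ₀ (τ₀ x) = x) (hτ₁ : ∀ a, τ₁ (τ₁ a) = a)
    (hh : ∀ a, hd (τ₁ a) = τ₀ (tl a)) (ht : ∀ a, tl (τ₁ a) = τ₀ (hd a))
    (hα : ∀ x, α (τ₀ x) = α x)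
    (M : ∀ a : At, Matrix (Fin (α (hd a))) (Fin (α (tl a))) ℂ)
    (hsym : TauSymm hd tl α τ₀ τ₁ hh ht hα M)
    (σ : Vt → ℤ) (hσ : ∀ x, σ (τ₀ x) = -σ x)
    (W : ∀ x : Vt, Submodule ℂ (Fin (α x) → ℂ))
    (hwit : IsWitness hd tl α M σ W)
    (hmin : ∀ W', IsWitness hd tl α M σ W' → ∀ x, W x ≤ W' x) :
    (IsWitness hd tl α M σ (fun x => perp (hα x) (W (τ₀ x))) ∧
      ∀ W', IsWitness hd tl α M σ W' →
        ∀ x, W' x ≤ perp (hα x) (W (τ₀ x))) ∧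
    (∀ x, W x ≤ perp (hα x) (W (τ₀ x))) ∧
    (∀ x, τ₀ x = x → Module.finrank ℂ (W x) = 0) :=
  minimal_witness_perp_general hd tl α τ₀ τ₁ hτ₀ hh ht hα M hsym σ hσ W hwit hmin
end

section
/- Let τ be an involution of Q, V a τ-symmetric representation with α = τ·α, σ = −τ·σ a weight, and W the minimal witness of (V,σ), with W ⊆ W^⊥ (τ-isotropic). Then Hom_Q(W, W^⊥/W) = 0 and Hom_Q(W, V/W^⊥) = 0. -/
open Module

/-!
Let `B` be a subrepresentation with `σ(dim B) = disc`, and `ψ : W → V/B` a morphism from the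
minimal witness. Its kernel `K` and the preimage `U` of its image are subrepresentations with
`σ(dim K) + σ(dim U) = σ(dim W) + σ(dim B) = 2 disc`; since neither exceeds `disc`, `K` is a
witness, so `W ≤ K` and `ψ = 0`. The case `B = W^⊥` uses
`σ(dim W^⊥) = σ(α) - (τ·σ)(dim W) = σ(dim W)`, which holds as `σ = -τ·σ` and `α = τ·α`; the
case of `W^⊥/W` reduces to `B = W`, since `W^⊥/W` embeds into `V/W`.
-/

lemma finrank_perp_add {m n : ℕ} (h : m = n) (W : Submodule ℂ (Fin m → ℂ)) :
    finrank ℂ (perp h W) + finrank ℂ W = n := by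
  subst h
  let L := (WithLp.linearEquiv 2 ℂ (Fin m → ℂ)).symm
  have hperp : perp rfl W = (W.comap L.symm.toLinearMap).orthogonal.map L.symm.toLinearMap := by
    ext v
    constructor
    · intro hv
      refine ⟨L v, fun u hu => ?_, rfl⟩
      simpa [EuclideanSpace.inner_eq_star_dotProduct, dotProduct, mul_comm, L] using
        hv (L.symm u) hu
    · rintro ⟨u, hu, rfl⟩ w hw
      simpa [EuclideanSpace.inner_eq_star_dotProduct, dotProduct, mul_comm, L] using
        hu (L w) (by simpa using hw)
  have hcomap : finrank ℂ (W.comap L.symm.toLinearMap) = finrank ℂ W := by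
    rw [Submodule.comap_equiv_eq_map_symm]
    exact LinearEquiv.finrank_map_eq _ _
  rw [hperp, LinearEquiv.finrank_map_eq, ← hcomap, add_comm,
    Submodule.finrank_add_finrank_orthogonal, finrank_euclideanSpace_fin]

lemma Submodule.finrank_comap_mkQ_s13 {K V : Type*} [Field K] [AddCommGroup V] [Module K V]
    [FiniteDimensional K V] (p : Submodule K V) (T : Submodule K (V ⧸ p)) :
    finrank K (T.comap p.mkQ) = finrank K p + finrank K T := by
  set f := p.mkQ.domRestrict (T.comap p.mkQ)
  have hrange : LinearMap.range f = T := by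
    rw [LinearMap.range_domRestrict, Submodule.map_comap_eq_of_surjective p.mkQ_surjective]
  have hker : LinearMap.ker f = p.comap (T.comap p.mkQ).subtype := by
    rw [LinearMap.ker_domRestrict, Submodule.ker_mkQ]
  rw [← LinearMap.finrank_range_add_finrank_ker f, hrange, hker,
    (Submodule.comapSubtypeEquivOfLe (p.le_comap_mkQ T)).finrank_eq, add_comm]

lemma Fintype.sum_eq_zero_of_comp_involutive_eq_neg {ι : Type*} [Fintype ι] {τ : ι → ι}
    (hτ : Function.Involutive τ) (f : ι → ℤ) (hf : ∀ x, f (τ x) = -f x) : ∑ x, f x = 0 := by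
  have h : ∑ x, f (τ x) = ∑ x, f x := Fintype.sum_equiv hτ.toPerm _ _ fun _ => rfl
  simp only [hf, Finset.sum_neg_distrib] at h
  omega

lemma Submodule.mapQ_comap_subtype_injective {R V : Type*} [Ring R] [AddCommGroup V]
    [Module R V] (P W : Submodule R V) :
    Function.Injective ((W.comap P.subtype).mapQ W P.subtype le_rfl) := by
  rw [← LinearMap.ker_eq_bot, Submodule.ker_mapQ, Submodule.mkQ_map_self]

section Witness

variable {Vt At : Type} {hd tl : At → Vt} {α : Vt → ℕ}
  {M : ∀ a : At, Matrix (Fin (α (hd a))) (Fin (α (tl a))) ℂ} {σ : Vt → ℤ}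

lemma isSubrep_map_ker {W : ∀ x : Vt, Submodule ℂ (Fin (α x) → ℂ)}
    (hW : IsSubrep hd tl α M W) {E : Vt → Type*} [∀ x, AddCommGroup (E x)]
    [∀ x, Module ℂ (E x)] (φ : ∀ x, W x →ₗ[ℂ] E x) (f : ∀ a, E (tl a) →ₗ[ℂ] E (hd a))
    (hφ : ∀ a (v : W (tl a)), φ (hd a) ⟨(M a).mulVec v, hW a v v.2⟩ = f a (φ (tl a) v)) :
    IsSubrep hd tl α M fun x => (LinearMap.ker (φ x)).map (W x).subtype := by
  rintro a _ ⟨v, hv, rfl⟩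
  refine ⟨⟨(M a).mulVec v, hW a v v.2⟩, ?_, rfl⟩
  rw [SetLike.mem_coe, LinearMap.mem_ker] at hv ⊢
  rw [hφ, hv, map_zero]

lemma isSubrep_comap_mkQ_range {W B : ∀ x : Vt, Submodule ℂ (Fin (α x) → ℂ)}
    (hW : IsSubrep hd tl α M W) (hB : IsSubrep hd tl α M B)
    (ψ : ∀ x, W x →ₗ[ℂ] (Fin (α x) → ℂ) ⧸ B x)
    (hψ : ∀ a (v : W (tl a)), ψ (hd a) ⟨(M a).mulVec v, hW a v v.2⟩ =
      (B (tl a)).mapQ (B (hd a)) (M a).mulVecLin (fun u hu => hB a u hu) (ψ (tl a) v)) :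
    IsSubrep hd tl α M fun x => (LinearMap.range (ψ x)).comap (B x).mkQ := by
  rintro a v ⟨w, hw⟩
  refine ⟨⟨(M a).mulVec w, hW a w w.2⟩, ?_⟩
  rw [hψ, hw]
  rfl

variable [Fintype Vt]

lemma sval_perp_eq {τ₀ : Vt → Vt} (hτ₀ : ∀ x, τ₀ (τ₀ x) = x) (hα : ∀ x, α (τ₀ x) = α x)
    (hσ : ∀ x, σ (τ₀ x) = -σ x) (W : ∀ x : Vt, Submodule ℂ (Fin (α x) → ℂ)) :
    sval α σ (fun x => perp (hα x) (W (τ₀ x))) = sval α σ W := by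
  have hrank (x : Vt) : (finrank ℂ (perp (hα x) (W (τ₀ x))) : ℤ) =
      α x - finrank ℂ (W (τ₀ x)) := by
    have := finrank_perp_add (hα x) (W (τ₀ x))
    omega
  have hW (x : Vt) : finrank ℂ (W (τ₀ (τ₀ x))) = finrank ℂ (W x) :=
    congrArg (fun y => finrank ℂ (W y)) (hτ₀ x)
  rw [← sub_eq_zero, sval, sval, ← Finset.sum_sub_distrib]
  refine Fintype.sum_eq_zero_of_comp_involutive_eq_neg hτ₀ _ fun x => ?_
  simp only [hrank, hσ, hα, hW]
  ring

lemma sval_add_sval_eq {U K B W : ∀ x : Vt, Submodule ℂ (Fin (α x) → ℂ)}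
    (h : ∀ x, finrank ℂ (U x) + finrank ℂ (K x) = finrank ℂ (B x) + finrank ℂ (W x)) :
    sval α σ U + sval α σ K = sval α σ B + sval α σ W := by
  simp only [sval, ← Finset.sum_add_distrib]
  refine Finset.sum_congr rfl fun x _ => ?_
  have hx : (finrank ℂ (U x) + finrank ℂ (K x) : ℤ) = finrank ℂ (B x) + finrank ℂ (W x) := by
    exact_mod_cast h x
  linear_combination σ x * hx

theorem hom_to_quotient_eq_zero {W B : ∀ x : Vt, Submodule ℂ (Fin (α x) → ℂ)}
    (hwit : IsWitness hd tl α M σ W) (hmin : ∀ W', IsWitness hd tl α M σ W' → ∀ x, W x ≤ W' x)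
    (hB : IsSubrep hd tl α M B) (hBW : sval α σ B = sval α σ W)
    (ψ : ∀ x, W x →ₗ[ℂ] (Fin (α x) → ℂ) ⧸ B x)
    (hψ : ∀ a (v : W (tl a)), ψ (hd a) ⟨(M a).mulVec v, hwit.1 a v v.2⟩ =
      (B (tl a)).mapQ (B (hd a)) (M a).mulVecLin (fun u hu => hB a u hu) (ψ (tl a) v)) :
    ∀ x, ψ x = 0 := by
  set K := fun x => (LinearMap.ker (ψ x)).map (W x).subtype
  set U := fun x => (LinearMap.range (ψ x)).comap (B x).mkQ
  have hK : IsSubrep hd tl α M K := isSubrep_map_ker hwit.1 ψ _ hψ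
  have hU : IsSubrep hd tl α M U := isSubrep_comap_mkQ_range hwit.1 hB ψ hψ
  have hdim : sval α σ U + sval α σ K = sval α σ B + sval α σ W := by
    refine sval_add_sval_eq fun x => ?_
    rw [Submodule.finrank_comap_mkQ_s13, Submodule.finrank_map_subtype_eq,
      ← LinearMap.finrank_range_add_finrank_ker (ψ x)]
    ring
  have hKwit : IsWitness hd tl α M σ K :=
    ⟨hK, fun W' hW' => (hwit.2 W' hW').trans (by linarith [hwit.2 U hU])⟩
  intro x
  rw [← LinearMap.ker_eq_top, eq_top_iff,
    ← Submodule.map_le_map_iff_of_injective (W x).injective_subtype, Submodule.map_subtype_top]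
  exact hmin K hKwit x

end Witness

theorem hom_minimal_witness_isotropic_zero_general {Vt At : Type} [Fintype Vt]
    (hd tl : At → Vt) (α : Vt → ℕ) (τ₀ : Vt → Vt)
    (hτ₀ : ∀ x, τ₀ (τ₀ x) = x)
    (hα : ∀ x, α (τ₀ x) = α x)
    (M : ∀ a : At, Matrix (Fin (α (hd a))) (Fin (α (tl a))) ℂ)
    (σ : Vt → ℤ) (hσ : ∀ x, σ (τ₀ x) = -σ x)
    (W : ∀ x : Vt, Submodule ℂ (Fin (α x) → ℂ))
    (hwit : IsWitness hd tl α M σ W)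
    (hmin : ∀ W', IsWitness hd tl α M σ W' → ∀ x, W x ≤ W' x)
    (hPsub : IsSubrep hd tl α M (fun x => perp (hα x) (W (τ₀ x)))) :
    (∀ φ : ∀ x : Vt, W x →ₗ[ℂ]
        ((perp (hα x) (W (τ₀ x))) ⧸
          Submodule.comap (perp (hα x) (W (τ₀ x))).subtype (W x)),
      (∀ a : At, ∀ v : W (tl a),
        φ (hd a) ⟨(M a).mulVec v, hwit.1 a v v.2⟩ =
          Submodule.mapQ
            (Submodule.comap (perp (hα (tl a)) (W (τ₀ (tl a)))).subtype (W (tl a)))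
            (Submodule.comap (perp (hα (hd a)) (W (τ₀ (hd a)))).subtype (W (hd a)))
            (LinearMap.restrict (M a).mulVecLin
              (p := perp (hα (tl a)) (W (τ₀ (tl a))))
              (q := perp (hα (hd a)) (W (τ₀ (hd a))))
              (fun u hu => hPsub a u hu))
            (fun u hu => hwit.1 a u hu)
            (φ (tl a) v)) →
      ∀ x, φ x = 0) ∧
    (∀ ψ : ∀ x : Vt, W x →ₗ[ℂ]
        ((Fin (α x) → ℂ) ⧸ perp (hα x) (W (τ₀ x))),
      (∀ a : At, ∀ v : W (tl a),
        ψ (hd a) ⟨(M a).mulVec v, hwit.1 a v v.2⟩ =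
          Submodule.mapQ (perp (hα (tl a)) (W (τ₀ (tl a))))
            (perp (hα (hd a)) (W (τ₀ (hd a)))) (M a).mulVecLin
            (fun u hu => hPsub a u hu)
            (ψ (tl a) v)) →
      ∀ x, ψ x = 0) := by
  let P := fun x => perp (hα x) (W (τ₀ x))
  refine ⟨fun φ hφ x => ?_, fun ψ hψ => ?_⟩
  · let ι x := ((W x).comap (P x).subtype).mapQ (W x) (P x).subtype le_rfl
    have hιφ := hom_to_quotient_eq_zero hwit hmin hwit.1 rfl (fun x => ι x ∘ₗ φ x)
      (fun a v => by
        rw [LinearMap.comp_apply, LinearMap.comp_apply, hφ]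
        induction φ (tl a) v using Submodule.Quotient.induction_on
        rfl)
      x
    ext v : 1
    exact Submodule.mapQ_comap_subtype_injective (P x) (W x)
      (by simpa using LinearMap.congr_fun hιφ v)
  · exact hom_to_quotient_eq_zero hwit hmin hPsub (sval_perp_eq hτ₀ hα hσ W) ψ hψ

/-- For a `τ`-symmetric representation `V` with `α = τ·α`, an anti-invariant
weight `σ = −τ·σ`, and `W` the minimal witness of `(V,σ)` (which is
`τ`-isotropic: `W ⊆ W^⊥`), one has `Hom_Q(W, W^⊥/W) = 0` and
`Hom_Q(W, V/W^⊥) = 0`. -/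
theorem hom_minimal_witness_isotropic_zero {Vt At : Type} [Fintype Vt] [Fintype At]
    (hd tl : At → Vt) (α : Vt → ℕ) (τ₀ : Vt → Vt) (τ₁ : At → At)
    (hτ₀ : ∀ x, τ₀ (τ₀ x) = x) (hτ₁ : ∀ a, τ₁ (τ₁ a) = a)
    (hh : ∀ a, hd (τ₁ a) = τ₀ (tl a)) (ht : ∀ a, tl (τ₁ a) = τ₀ (hd a))
    (hα : ∀ x, α (τ₀ x) = α x)
    (M : ∀ a : At, Matrix (Fin (α (hd a))) (Fin (α (tl a))) ℂ)
    (hsym : TauSymm hd tl α τ₀ τ₁ hh ht hα M)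
    (σ : Vt → ℤ) (hσ : ∀ x, σ (τ₀ x) = -σ x)
    (W : ∀ x : Vt, Submodule ℂ (Fin (α x) → ℂ))
    (hwit : IsWitness hd tl α M σ W)
    (hmin : ∀ W', IsWitness hd tl α M σ W' → ∀ x, W x ≤ W' x)
    (hiso : ∀ x, W x ≤ perp (hα x) (W (τ₀ x)))
    (hPsub : IsSubrep hd tl α M (fun x => perp (hα x) (W (τ₀ x)))) :
    (∀ φ : ∀ x : Vt, W x →ₗ[ℂ]
        ((perp (hα x) (W (τ₀ x))) ⧸
          Submodule.comap (perp (hα x) (W (τ₀ x))).subtype (W x)),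
      (∀ a : At, ∀ v : W (tl a),
        φ (hd a) ⟨(M a).mulVec v, hwit.1 a v v.2⟩ =
          Submodule.mapQ
            (Submodule.comap (perp (hα (tl a)) (W (τ₀ (tl a)))).subtype (W (tl a)))
            (Submodule.comap (perp (hα (hd a)) (W (τ₀ (hd a)))).subtype (W (hd a)))
            (LinearMap.restrict (M a).mulVecLin
              (p := perp (hα (tl a)) (W (τ₀ (tl a))))
              (q := perp (hα (hd a)) (W (τ₀ (hd a))))
              (fun u hu => hPsub a u hu))
            (fun u hu => hwit.1 a u hu)
            (φ (tl a) v)) →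
      ∀ x, φ x = 0) ∧
    (∀ ψ : ∀ x : Vt, W x →ₗ[ℂ]
        ((Fin (α x) → ℂ) ⧸ perp (hα x) (W (τ₀ x))),
      (∀ a : At, ∀ v : W (tl a),
        ψ (hd a) ⟨(M a).mulVec v, hwit.1 a v v.2⟩ =
          Submodule.mapQ (perp (hα (tl a)) (W (τ₀ (tl a))))
            (perp (hα (hd a)) (W (τ₀ (hd a)))) (M a).mulVecLin
            (fun u hu => hPsub a u hu)
            (ψ (tl a) v)) →
      ∀ x, ψ x = 0) :=
  hom_minimal_witness_isotropic_zero_general hd tl α τ₀ hτ₀ hα M σ hσ W hwit hmin hPsub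
end
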